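/- There exist three mutually orthogonal planes H_1, H_2, H_3 in ℝ³ such that each H_i intersects the set {(t, t², t³) : t ≥ 0} in at least 2 points. -/

import Mathlib

open scoped InnerProductSpace

/-- The moment curve in `ℝ³`: `γ(t) = (t, t², t³)`. -/
noncomputable def momentCurve3 : ℝ → EuclideanSpace ℝ (Fin 3) :=
  fun t => WithLp.toLp 2 (fun i : Fin 3 => t ^ ((i : ℕ) + 1))

/-- There exist three mutually orthogonal planes in `ℝ³` each of which
meets `{(t, t², t³) : t ≥ 0}` in at least two points. -/
theorem exists_orthogonal_planes_each_meeting_curve_twice :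
    ∃ (u : Fin 3 → EuclideanSpace ℝ (Fin 3)) (c : Fin 3 → ℝ),
      (∀ i, ‖u i‖ = 1) ∧ (∀ i j, i ≠ j → ⟪u i, u j⟫_ℝ = 0) ∧
      ∀ i : Fin 3, ∃ x y : EuclideanSpace ℝ (Fin 3), x ≠ y ∧
        x ∈ momentCurve3 '' Set.Ici (0 : ℝ) ∩ {z | ⟪z, u i⟫_ℝ = c i} ∧
        y ∈ momentCurve3 '' Set.Ici (0 : ℝ) ∩ {z | ⟪z, u i⟫_ℝ = c i} := by
  have h3 : Real.sqrt 3 ^ 2 = 3 := Real.sq_sqrt (by norm_num)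
  have h3nn : (0:ℝ) ≤ Real.sqrt 3 := Real.sqrt_nonneg 3
  have h3pos : (0:ℝ) < Real.sqrt 3 := Real.sqrt_pos.mpr (by norm_num)
  have h21 : Real.sqrt 21 ^ 2 = 21 := Real.sq_sqrt (by norm_num)
  have h21nn : (0:ℝ) ≤ Real.sqrt 21 := Real.sqrt_nonneg 21
  have h21pos : (0:ℝ) < Real.sqrt 21 := Real.sqrt_pos.mpr (by norm_num)
  refine ⟨fun i => (WithLp.equiv 2 (Fin 3 → ℝ)).symm
      (![![3/37, -8/37, -36/37], ![-24/37, 27/37, -8/37], ![28/37, 24/37, -3/37]] i),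
    ![55/12691, -11/148, 177/296], ?_, ?_, ?_⟩
  · intro i
    rw [EuclideanSpace.norm_eq]
    fin_cases i <;>
    · rw [show (1:ℝ) = Real.sqrt 1 from (Real.sqrt_one).symm]
      congr 1
      simp [Fin.sum_univ_three, Real.norm_eq_abs, sq_abs]
      norm_num
  · intro i j hij
    fin_cases i <;> fin_cases j <;> simp_all <;>
      simp [PiLp.inner_apply, RCLike.inner_apply, Fin.sum_univ_three] <;> norm_num
  · intro i
    fin_cases i
    · refine ⟨momentCurve3 (1/14), momentCurve3 (1/7), ?_, ⟨⟨1/14, by norm_num, rfl⟩, ?_⟩,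
        ⟨⟨1/7, by norm_num, rfl⟩, ?_⟩⟩
      · intro h
        have := congrArg (fun v : EuclideanSpace ℝ (Fin 3) => v 0) h
        simp [momentCurve3] at this
      · simp [PiLp.inner_apply, RCLike.inner_apply, Fin.sum_univ_three, momentCurve3]
        norm_num
      · simp [PiLp.inner_apply, RCLike.inner_apply, Fin.sum_univ_three, momentCurve3]
        norm_num
    · refine ⟨momentCurve3 (1 - Real.sqrt 3 / 2), momentCurve3 (1 + Real.sqrt 3 / 2), ?_,
        ⟨⟨1 - Real.sqrt 3 / 2, ?_, rfl⟩, ?_⟩, ⟨⟨1 + Real.sqrt 3 / 2, by simp only [Set.mem_Ici]; positivity, rfl⟩, ?_⟩⟩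
      · intro h
        have := congrArg (fun v : EuclideanSpace ℝ (Fin 3) => v 0) h
        simp [momentCurve3] at this
        nlinarith
      · simp only [Set.mem_Ici]
        nlinarith
      · simp [PiLp.inner_apply, RCLike.inner_apply, Fin.sum_univ_three, momentCurve3]
        linear_combination (3/148 + Real.sqrt 3 / 37) * h3
      · simp [PiLp.inner_apply, RCLike.inner_apply, Fin.sum_univ_three, momentCurve3]
        linear_combination (3/148 - Real.sqrt 3 / 37) * h3
    · refine ⟨momentCurve3 (19/4 - (11/12) * Real.sqrt 21),
        momentCurve3 (19/4 + (11/12) * Real.sqrt 21), ?_,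
        ⟨⟨19/4 - (11/12) * Real.sqrt 21, ?_, rfl⟩, ?_⟩,
        ⟨⟨19/4 + (11/12) * Real.sqrt 21, by simp only [Set.mem_Ici]; positivity, rfl⟩, ?_⟩⟩
      · intro h
        have := congrArg (fun v : EuclideanSpace ℝ (Fin 3) => v 0) h
        simp [momentCurve3] at this
        nlinarith
      · simp only [Set.mem_Ici]
        nlinarith
      · simp [PiLp.inner_apply, RCLike.inner_apply, Fin.sum_univ_three, momentCurve3]
        linear_combination (-3025/7104 + 1331/21312 * Real.sqrt 21) * h21
      · simp [PiLp.inner_apply, RCLike.inner_apply, Fin.sum_univ_three, momentCurve3]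
        linear_combination (-3025/7104 - 1331/21312 * Real.sqrt 21) * h21
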